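/- Let S = ⊕_{i∈ℤ} S_i be an epsilon-strongly ℤ-graded ring with principal component R = S_0. If R is right noetherian, then S is right noetherian. -/

import Mathlib

open Pointwise

/-- `A` is a `ℤ`-grading of the ring `S`: `S` is the internal direct sum of the
additive subgroups `A i`, and `A i * A j ⊆ A (i + j)` for all `i j : ℤ`. -/
def IsZGrading {S : Type*} [Ring S] (A : ℤ → AddSubgroup S) : Prop :=
  DirectSum.IsInternal A ∧ ∀ i j : ℤ, ∀ x ∈ A i, ∀ y ∈ A j, x * y ∈ A (i + j)

/-- The `ℤ`-grading `A` is epsilon-strong: it is symmetric (`A i * A (-i) * A i = A i`)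
and for every `i` there is `ε i ∈ A i * A (-i)` acting as a left identity on `A i`, with
`ε (-i)` acting as a right identity on `A i`.  Here `P * Q` denotes the additive subgroup
generated by products of elements of `P` and `Q`. -/
def IsEpsilonStrongZ {S : Type*} [Ring S] (A : ℤ → AddSubgroup S) : Prop :=
  (∀ i : ℤ, A i * A (-i) * A i = A i) ∧
  ∃ ε : ℤ → S, ∀ i : ℤ, ε i ∈ A i * A (-i) ∧ ∀ x ∈ A i, ε i * x = x ∧ x * ε (-i) = x

open DirectSum

/-!
A Hilbert-basis argument. For a right ideal `I` of `S` and `m : ℕ`, the degree-`0` coefficients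
of the elements of `I` with components only in degrees `-m, …, 0` form a right ideal `T_m(I)` of
`R`. If `I ≤ J` and `T_m(J) ≤ T_m(I)` for every `m`, then `J = I`: the top coefficient
`x ∈ S_n` of `z ∈ J` satisfies `x = x ε_{-n}` with `ε_{-n} ∈ S_{-n} S_n`, so moving `x` to
degree `0` with `S_{-n}`, lifting to `I` there and moving back with `S_n` gives `w ∈ I` with
the same top coefficient, and `z - w` has a shorter support. Since `T_m(I)` is monotone in both
`m` and `I`, the noetherianity of `R` stabilises all `T_m(I_k)` at once along an ascending chain
`(I_k)`, hence the chain itself.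
-/

theorem WellFoundedGT.monotone₂_chain_condition {α : Type*} [PartialOrder α] [WellFoundedGT α]
    {g : ℕ → ℕ → α} (hg : ∀ ⦃m m' k k' : ℕ⦄, m ≤ m' → k ≤ k' → g m k ≤ g m' k') :
    ∃ K, ∀ k, K ≤ k → ∀ m, g m K = g m k := by
  obtain ⟨N, hN⟩ := WellFoundedGT.monotone_chain_condition
    ⟨fun n => g n n, fun _ _ h => hg h h⟩
  choose K hK using fun m => WellFoundedGT.monotone_chain_condition
    ⟨g m, fun _ _ h => hg le_rfl h⟩
  refine ⟨max N ((Finset.range (N + 1)).sup K), fun k hk m => le_antisymm (hg le_rfl hk) ?_⟩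
  rcases le_or_gt m N with hmN | hNm
  · have hKm : K m ≤ max N ((Finset.range (N + 1)).sup K) :=
      (Finset.le_sup (Finset.mem_range.2 (Nat.lt_succ_of_le hmN))).trans (le_max_right _ _)
    exact ((hK m k (hKm.trans hk)).symm.trans (hK m _ hKm)).le
  · calc g m k ≤ g (max m k) (max m k) := hg (le_max_left _ _) (le_max_right _ _)
      _ = g N N := (hN _ (hNm.le.trans (le_max_left _ _))).symm
      _ ≤ g m _ := hg hNm.le (le_max_left _ _)

def HasRightLocalUnits {S : Type*} [Ring S] (A : ℤ → AddSubgroup S) : Prop :=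
  ∀ n, ∀ x ∈ A n, ∃ e ∈ A (-n) * A n, x * e = x

theorem IsEpsilonStrongZ.hasRightLocalUnits {S : Type*} [Ring S] {A : ℤ → AddSubgroup S}
    (h : IsEpsilonStrongZ A) : HasRightLocalUnits A := by
  obtain ⟨-, ε, hε⟩ := h
  exact fun n x hx => ⟨ε (-n), by simpa using (hε (-n)).1, ((hε n).2 x hx).2⟩

namespace ZGrading

variable {S : Type*} [Ring S] {A : ℤ → AddSubgroup S} [Decomposition A]

variable (A) in
def window (a b : ℤ) : AddSubgroup S where
  carrier := {z | ∀ i ∉ Set.Icc a b, decompose A z i = 0}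
  add_mem' hz hw i hi := by rw [decompose_add, DirectSum.add_apply, hz i hi, hw i hi, add_zero]
  zero_mem' i _ := by rw [decompose_zero, DirectSum.zero_apply]
  neg_mem' hz i hi := by rw [decompose_neg, DFinsupp.neg_apply, hz i hi, neg_zero]

variable {a b a' b' : ℤ} {z w : S}

theorem window_mono (ha : a' ≤ a) (hb : b ≤ b') : window A a b ≤ window A a' b' :=
  fun _ hz i hi => hz i fun ⟨hai, hib⟩ => hi ⟨ha.trans hai, hib.trans hb⟩

theorem window_eq_bot (h : b < a) : window A a b = ⊥ := by
  refine eq_bot_iff.2 fun z hz => ?_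
  have : decompose A z = decompose A 0 := by
    ext i
    rw [hz i fun ⟨hai, hib⟩ => (hai.trans hib).not_gt h, decompose_zero, DirectSum.zero_apply]
  exact (decompose A).injective this

theorem exists_mem_window (z : S) : ∃ N : ℕ, z ∈ window A (-N) N := by
  classical
  refine ⟨(decompose A z).support.sup Int.natAbs, fun i hi => ?_⟩
  by_contra hne
  have := Finset.le_sup (f := Int.natAbs) ((decompose A z).mem_support_iff.2 hne)
  exact hi ⟨by omega, by omega⟩

theorem sub_mem_window_sub_one (hz : z ∈ window A a b) (hw : w ∈ window A a b)
    (h : decompose A z b = decompose A w b) : z - w ∈ window A a (b - 1) := by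
  intro i hi
  rw [decompose_sub, DirectSum.sub_apply]
  rcases eq_or_ne i b with rfl | hib
  · rw [h, sub_self]
  · have hi' : i ∉ Set.Icc a b := fun ⟨hai, hib'⟩ => hi ⟨hai, by omega⟩
    rw [hz i hi', hw i hi', sub_zero]

variable [SetLike.GradedMul A] {j : ℤ} {s : S}

theorem coe_decompose_mul_of_right_mem_sub (hs : s ∈ A j) (x : S) (n : ℤ) :
    (decompose A (x * s) n : S) = decompose A x (n - j) * s := by
  induction x using Decomposition.inductionOn A generalizing n with
  | zero => simp
  | @homogeneous i x =>
    have hxs : (x : S) * s ∈ A (i + j) := SetLike.GradedMul.mul_mem x.2 hs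
    rcases eq_or_ne n (i + j) with rfl | hn
    · rw [add_sub_cancel_right, decompose_of_mem_same A hxs, decompose_coe, of_eq_same]
    · rw [decompose_of_mem_ne A hxs hn.symm, decompose_of_mem_ne A x.2 (by omega), zero_mul]
  | add x y hx hy => simp only [add_mul, decompose_add, DirectSum.add_apply,
      AddSubgroup.coe_add, hx, hy]

theorem mul_mem_window (hz : z ∈ window A a b) (hs : s ∈ A j) :
    z * s ∈ window A (a + j) (b + j) := by
  intro i hi
  rw [← Subtype.coe_inj, coe_decompose_mul_of_right_mem_sub hs,
    hz _ fun ⟨h₁, h₂⟩ => hi ⟨by omega, by omega⟩, ZeroMemClass.coe_zero, zero_mul,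
    ZeroMemClass.coe_zero]

variable {R : Subring S} {hR : (R : Set S) = A 0}

variable (A) in
def leadingCoeffs (hR : (R : Set S) = A 0) (m : ℕ) (I : Submodule Sᵐᵒᵖ S) :
    Submodule Rᵐᵒᵖ R where
  carrier := {u | ∃ z ∈ I, z ∈ window A (-m) 0 ∧ (decompose A z 0 : S) = u}
  add_mem' := by
    rintro u v ⟨z, hzI, hzw, hu⟩ ⟨w, hwI, hww, hv⟩
    exact ⟨z + w, add_mem hzI hwI, add_mem hzw hww, by simp [hu, hv]⟩
  zero_mem' := ⟨0, zero_mem I, zero_mem _, by simp⟩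
  smul_mem' := by
    rintro c u ⟨z, hzI, hzw, hu⟩
    have hc : (c.unop : S) ∈ A 0 := by rw [← SetLike.mem_coe, ← hR]; exact c.unop.2
    refine ⟨z * c.unop, I.smul_mem (.op c.unop) hzI, by simpa using mul_mem_window hzw hc, ?_⟩
    rw [coe_decompose_mul_of_right_mem_sub hc, sub_zero, hu]
    rfl

theorem leadingCoeffs_mono {m m' : ℕ} {I J : Submodule Sᵐᵒᵖ S} (hm : m ≤ m') (hIJ : I ≤ J) :
    leadingCoeffs A hR m I ≤ leadingCoeffs A hR m' J := by
  rintro u ⟨z, hzI, hzw, hu⟩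
  exact ⟨z, hIJ hzI, window_mono (by omega) le_rfl hzw, hu⟩

theorem exists_mem_leadingCoeffs_coe_eq_mul {m : ℕ} {n : ℤ} {I : Submodule Sᵐᵒᵖ S} {z x : S}
    (hzI : z ∈ I) (hzw : z ∈ window A (n - m) n) (hx : x ∈ A (-n)) :
    ∃ u ∈ leadingCoeffs A hR m I, (u : S) = decompose A z n * x := by
  have hzx : z * x ∈ window A (-m) 0 := by convert mul_mem_window hzw hx using 2 <;> ring
  have hcoeff : (decompose A (z * x) 0 : S) = decompose A z n * x := by
    rw [coe_decompose_mul_of_right_mem_sub hx, zero_sub, neg_neg]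
  have hR0 : (decompose A z n : S) * x ∈ R := by
    rw [← SetLike.mem_coe, hR, ← hcoeff]; exact SetLike.coe_mem _
  exact ⟨⟨_, hR0⟩, ⟨z * x, I.smul_mem (.op x) hzI, hzx, hcoeff⟩, rfl⟩

theorem exists_mem_window_coe_decompose_eq_mul {m : ℕ} {n : ℤ} {I : Submodule Sᵐᵒᵖ S} {u : R}
    (hu : u ∈ leadingCoeffs A hR m I) {y : S} (hy : y ∈ A n) :
    ∃ w ∈ I, w ∈ window A (n - m) n ∧ (decompose A w n : S) = u * y := by
  obtain ⟨z, hzI, hzw, hu⟩ := hu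
  have hzy : z * y ∈ window A (n - m) n := by convert mul_mem_window hzw hy using 2 <;> ring
  refine ⟨z * y, I.smul_mem (.op y) hzI, hzy, ?_⟩
  rw [coe_decompose_mul_of_right_mem_sub hy, sub_self, hu]

theorem exists_mem_window_decompose_eq (hunit : HasRightLocalUnits A) {m : ℕ} {n : ℤ}
    {I J : Submodule Sᵐᵒᵖ S}
    (hT : leadingCoeffs A hR m J ≤ leadingCoeffs A hR m I) {z : S} (hzJ : z ∈ J)
    (hzw : z ∈ window A (n - m) n) :
    ∃ w ∈ I, w ∈ window A (n - m) n ∧ decompose A w n = decompose A z n := by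
  set x : S := (decompose A z n : S)
  obtain ⟨e, he, hxe⟩ := hunit n x (SetLike.coe_mem _)
  suffices h : ∃ w ∈ I, w ∈ window A (n - m) n ∧ (decompose A w n : S) = x * e by
    obtain ⟨w, hwI, hww, hw⟩ := h
    exact ⟨w, hwI, hww, Subtype.ext (hw.trans hxe)⟩
  refine AddSubmonoid.mul_induction_on (M := (A (-n)).toAddSubmonoid) he
    (fun a ha b hb => ?_) fun e₁ e₂ ⟨w₁, hw₁I, hw₁w, hw₁⟩ ⟨w₂, hw₂I, hw₂w, hw₂⟩ => ?_
  · obtain ⟨u, hu, hux⟩ := exists_mem_leadingCoeffs_coe_eq_mul hzJ hzw ha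
    obtain ⟨w, hwI, hww, hw⟩ := exists_mem_window_coe_decompose_eq_mul (hT hu) hb
    exact ⟨w, hwI, hww, by rw [hw, hux, mul_assoc]⟩
  · refine ⟨w₁ + w₂, add_mem hw₁I hw₂I, add_mem hw₁w hw₂w, ?_⟩
    rw [decompose_add, DirectSum.add_apply, AddSubgroup.coe_add, hw₁, hw₂, mul_add]

theorem le_of_leadingCoeffs_le (hunit : HasRightLocalUnits A)
    {I J : Submodule Sᵐᵒᵖ S} (hIJ : I ≤ J)
    (hT : ∀ m, leadingCoeffs A hR m J ≤ leadingCoeffs A hR m I) : J ≤ I := by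
  have peel : ∀ (m : ℕ) (n : ℤ), ∀ z ∈ J, z ∈ window A (n - m) n →
      ∃ w ∈ I, z - w ∈ J ∧ z - w ∈ window A (n - m) (n - 1) := by
    intro m n z hzJ hzw
    obtain ⟨w, hwI, hww, hw⟩ := exists_mem_window_decompose_eq hunit (hT m) hzJ hzw
    exact ⟨w, hwI, sub_mem hzJ (hIJ hwI), sub_mem_window_sub_one hzw hww hw.symm⟩
  have h : ∀ (m : ℕ) (n : ℤ), ∀ z ∈ J, z ∈ window A (n - m) n → z ∈ I := by
    intro m
    induction m with
    | zero =>
      intro n z hzJ hzw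
      obtain ⟨w, hwI, -, hzw'⟩ := peel 0 n z hzJ hzw
      rw [window_eq_bot (by omega), AddSubgroup.mem_bot, sub_eq_zero] at hzw'
      rwa [hzw']
    | succ m ih =>
      intro n z hzJ hzw
      obtain ⟨w, hwI, hzwJ, hzw'⟩ := peel (m + 1) n z hzJ hzw
      rw [show n - (m + 1 : ℕ) = n - 1 - m by push_cast; ring] at hzw'
      simpa using add_mem (ih (n - 1) _ hzwJ hzw') hwI
  intro z hz
  obtain ⟨N, hN⟩ := exists_mem_window (A := A) z
  exact h (2 * N) N z hz (by convert hN using 2; push_cast; ring)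

theorem isNoetherian_op_of_degree_zero (hR : (R : Set S) = A 0) [IsNoetherian Rᵐᵒᵖ R]
    (hunit : HasRightLocalUnits A) : IsNoetherian Sᵐᵒᵖ S := by
  refine isNoetherian_iff'.2 <| wellFoundedGT_iff_monotone_chain_condition.2 fun f => ?_
  obtain ⟨K, hK⟩ := WellFoundedGT.monotone₂_chain_condition
    (g := fun m k => leadingCoeffs A hR m (f k))
    fun _ _ _ _ hm hk => leadingCoeffs_mono hm (f.monotone hk)
  exact ⟨K, fun k hk => le_antisymm (f.monotone hk)
    (le_of_leadingCoeffs_le hunit (f.monotone hk) fun m => (hK k hk m).ge)⟩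

end ZGrading

/-- If `S` is an epsilon-strongly `ℤ`-graded ring whose principal component `R = S_0` is
right noetherian, then `S` is right noetherian.
(A ring is right noetherian iff its multiplicative opposite is left noetherian.) -/
theorem epsilonStrongZ_right_noetherian
    {S : Type*} [Ring S] (A : ℤ → AddSubgroup S)
    (hgrading : IsZGrading A) (heps : IsEpsilonStrongZ A)
    (R : Subring S) (hR : (R : Set S) = (A 0 : Set S))
    (hRnoeth : IsNoetherianRing (↥R)ᵐᵒᵖ) :
    IsNoetherianRing Sᵐᵒᵖ := by
  obtain ⟨hA, hmul⟩ := hgrading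
  let := hA.chooseDecomposition
  have : SetLike.GradedMul A := ⟨fun i j _ _ hx hy => hmul i j _ hx _ hy⟩
  have : IsNoetherian Rᵐᵒᵖ R := isNoetherian_of_linearEquiv (MulOpposite.opLinearEquiv Rᵐᵒᵖ).symm
  have := ZGrading.isNoetherian_op_of_degree_zero hR heps.hasRightLocalUnits
  exact isNoetherianRing_iff.2 <| isNoetherian_of_linearEquiv <|
    MulOpposite.opLinearEquiv Sᵐᵒᵖ
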